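/- arXiv:1701.02674 — 6 statements merged into one kernel-verified Lean document; each statement's English description precedes it below -/
import Mathlib

section
/- For multiplicative characters A, B, C of F_q^* (extended to F_q by χ(0)=0) and x ∈ F_q, the finite field hypergeometric function ₂F₁[A,B;C;x] := ε(x)·B(-1)·C(-1)·∑_{u∈F_q} B(u)·(B̄C)(1-u)·Ā(1-ux) satisfies ₂F₁[A,B;C;x] = (1/(q-1)) ∑_χ [Aχ choose χ][Bχ choose Cχ] χ(x), where the sum is over all multiplicative characters χ and [A choose B] := B(-1)·J(A,B̄) with J the Jacobi sum. -/
open Finset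

variable {F : Type*} [Field F] [Fintype F] [DecidableEq F]

/-- Finite-field binomial coefficient `[A choose B] = B(-1) * J(A, B⁻¹)`. -/
noncomputable def ffBinom (A B : MulChar F ℂ) : ℂ :=
  B (-1) * jacobiSum A B⁻¹

/-- Finite-field Gauss hypergeometric function
`₂F₁[A,B;C;x] = ε(x)·(BC)(-1)·∑_u B(u)(B̅C)(1-u)A̅(1-ux)`. -/
noncomputable def ffHyp (A B C : MulChar F ℂ) (x : F) : ℂ :=
  (1 : MulChar F ℂ) x * (B * C) (-1) *
    ∑ u : F, B u * (B⁻¹ * C) (1 - u) * A⁻¹ (1 - u * x)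

/-- Finite-field Appell function
`F₁(A;B,B';C;x,y) = ε(xy)·(AC)(-1)·∑_u A(u)(A̅C)(1-u)B̅(1-ux)B̅'(1-uy)`. -/
noncomputable def ffAppellF1 (A B B' C : MulChar F ℂ) (x y : F) : ℂ :=
  (1 : MulChar F ℂ) (x * y) * (A * C) (-1) *
    ∑ u : F, A u * (A⁻¹ * C) (1 - u) * B⁻¹ (1 - u * x) * B'⁻¹ (1 - u * y)

/-- δ(0)=1, δ(t)=0 otherwise. -/
noncomputable def ffDelta (x : F) : ℂ := if x = 0 then 1 else 0

set_option linter.unusedSectionVars false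

/-- Orthogonality: the sum of `χ a` over all multiplicative characters is `q - 1` if `a = 1`
and `0` otherwise. -/
lemma ffAux_sum_chars_eq [Fintype (MulChar F ℂ)] (a : F) :
    ∑ χ : MulChar F ℂ, χ a = if a = 1 then ((Fintype.card F : ℂ) - 1) else 0 := by
  haveI : NeZero (Monoid.exponent Fˣ) := ⟨Monoid.exponent_ne_zero_of_finite⟩
  split_ifs with ha
  · subst ha
    simp only [map_one, Finset.sum_const, Finset.card_univ, nsmul_eq_mul, mul_one]
    have h1 : Fintype.card (MulChar F ℂ) = Fintype.card F - 1 := by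
      rw [← Nat.card_eq_fintype_card, MulChar.card_eq_card_units_of_hasEnoughRootsOfUnity,
        Nat.card_eq_fintype_card, Fintype.card_units]
    rw [h1, Nat.cast_sub Fintype.card_pos, Nat.cast_one]
  · obtain ⟨χ, hχ⟩ := MulChar.exists_apply_ne_one_of_hasEnoughRootsOfUnity F ℂ ha
    refine eq_zero_of_mul_eq_self_left hχ ?_
    simp only [Finset.mul_sum, ← MulChar.mul_apply]
    exact Fintype.sum_bijective _ (Group.mulLeft_bijective χ) _ _ fun χ' ↦ rfl

/-- Expansion of the product of the two binomial coefficients times `χ x` as a double sum. -/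
lemma ffAux_perchi (A B C : MulChar F ℂ) (x : F) (χ : MulChar F ℂ) :
    ffBinom (A * χ) χ * ffBinom (B * χ) (C * χ) * χ x =
      ∑ s : F, ∑ t : F,
        (C (-1) * (A s * (B t * C⁻¹ (1 - t)))) * χ (s * (1 - s)⁻¹ * (t * (1 - t)⁻¹) * x) := by
  have hsq : χ (-1) * χ (-1) = 1 := by
    rw [← map_mul, neg_mul_neg, one_mul, map_one]
  simp only [ffBinom, jacobiSum, mul_inv, MulChar.mul_apply, MulChar.inv_apply',
    Finset.mul_sum, Finset.sum_mul]
  rw [Finset.sum_comm]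
  refine Finset.sum_congr rfl fun s _ ↦ ?_
  refine Finset.sum_congr rfl fun t _ ↦ ?_
  simp only [map_mul]
  linear_combination (C (-1) * (A s * χ s * χ (1 - s)⁻¹) *
    (B t * χ t * (C (1 - t)⁻¹ * χ (1 - t)⁻¹)) * χ x) * hsq

lemma ffAux_unpack {s t x : F} (h : s * (1 - s)⁻¹ * (t * (1 - t)⁻¹) * x = 1) :
    s ≠ 0 ∧ (1 - s) ≠ 0 ∧ t ≠ 0 ∧ (1 - t) ≠ 0 ∧ x ≠ 0 ∧ s * t * x = (1 - s) * (1 - t) := by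
  have hs : s ≠ 0 := by rintro rfl; simp at h
  have h1s : (1 : F) - s ≠ 0 := by intro e; rw [e] at h; simp at h
  have ht : t ≠ 0 := by rintro rfl; simp at h
  have h1t : (1 : F) - t ≠ 0 := by intro e; rw [e] at h; simp at h
  have hx : x ≠ 0 := by rintro rfl; simp at h
  refine ⟨hs, h1s, ht, h1t, hx, ?_⟩
  field_simp at h
  linear_combination h

/-- The combinatorial core: `₂F₁` as a double sum over the solutions of `stx = (1-s)(1-t)`. -/
lemma ffAux_core (A B C : MulChar F ℂ) (x : F) :
    ffHyp A B C x = ∑ s : F, ∑ t : F,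
      if s * (1 - s)⁻¹ * (t * (1 - t)⁻¹) * x = 1 then
        C (-1) * (A s * (B t * C⁻¹ (1 - t))) else 0 := by
  rcases eq_or_ne x 0 with rfl | hx
  · simp [ffHyp, MulChar.map_zero, mul_zero]
  · rw [ffHyp, MulChar.one_apply (isUnit_iff_ne_zero.mpr hx), one_mul, Finset.mul_sum]
    rw [← Finset.sum_filter_of_ne (p := fun u : F => u ≠ 0 ∧ (1:F) - u ≠ 0 ∧ (1:F) - u * x ≠ 0)
      (fun u _ h => ⟨fun e => h (by rw [e]; simp [MulChar.map_zero]),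
        fun e => h (by rw [e]; simp [MulChar.map_zero]),
        fun e => h (by rw [e]; simp [MulChar.map_zero])⟩)]
    rw [← Finset.sum_product' (f := fun s t => if s * (1 - s)⁻¹ * (t * (1 - t)⁻¹) * x = 1 then
        C (-1) * (A s * (B t * C⁻¹ (1 - t))) else 0),
      ← Finset.sum_filter]
    refine Finset.sum_nbij' (fun u => ((1 - u * x)⁻¹, u * (u - 1)⁻¹))
      (fun p => p.2 * (p.2 - 1)⁻¹) ?_ ?_ ?_ ?_ ?_
    · rintro u hu
      simp only [Finset.mem_filter, Finset.mem_univ, true_and] at hu ⊢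
      obtain ⟨hu0, h1u, h1ux⟩ := hu
      have hu1 : u - 1 ≠ 0 := fun e => h1u (by linear_combination -e)
      refine ⟨Finset.mem_product.mpr ⟨Finset.mem_univ _, Finset.mem_univ _⟩, ?_⟩
      rw [show (1:F) - (1 - u * x)⁻¹ = (-(u * x)) * (1 - u * x)⁻¹ by field_simp; ring,
        show (1:F) - u * (u - 1)⁻¹ = (-1) * (u - 1)⁻¹ by field_simp; ring]
      field_simp
    · rintro ⟨s, t⟩ hp
      simp only [Finset.mem_filter, Finset.mem_univ, true_and] at hp ⊢
      obtain ⟨hs, h1s, ht, h1t, -, hrel⟩ := ffAux_unpack hp.2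
      have ht1 : t - 1 ≠ 0 := fun e => h1t (by linear_combination -e)
      have hd : (1:F) - t + t * x ≠ 0 :=
        fun e => mul_ne_zero ht hx (by linear_combination hrel + (1 - s) * e)
      refine ⟨mul_ne_zero ht (inv_ne_zero ht1), ?_, ?_⟩
      · rw [show (1:F) - t * (t - 1)⁻¹ = (-1) * (t - 1)⁻¹ by field_simp; ring]
        exact mul_ne_zero (neg_ne_zero.mpr one_ne_zero) (inv_ne_zero ht1)
      · rw [show (1:F) - t * (t - 1)⁻¹ * x = (-((1:F) - t + t * x)) * (t - 1)⁻¹ by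
          field_simp; ring]
        exact mul_ne_zero (neg_ne_zero.mpr hd) (inv_ne_zero ht1)
    · rintro u hu
      simp only [Finset.mem_filter, Finset.mem_univ, true_and] at hu
      obtain ⟨hu0, h1u, h1ux⟩ := hu
      have hu1 : u - 1 ≠ 0 := fun e => h1u (by linear_combination -e)
      show u * (u - 1)⁻¹ * (u * (u - 1)⁻¹ - 1)⁻¹ = u
      rw [show u * (u - 1)⁻¹ - 1 = (u - 1)⁻¹ by field_simp; ring, inv_inv]
      field_simp
    · rintro ⟨s, t⟩ hp
      simp only [Finset.mem_filter, Finset.mem_univ, true_and] at hp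
      obtain ⟨hs, h1s, ht, h1t, -, hrel⟩ := ffAux_unpack hp.2
      have ht1 : t - 1 ≠ 0 := fun e => h1t (by linear_combination -e)
      have hd : (1:F) - t + t * x ≠ 0 :=
        fun e => mul_ne_zero ht hx (by linear_combination hrel + (1 - s) * e)
      have hx' : x ≠ 0 := hx
      simp only [Prod.mk.injEq]
      constructor
      · have hm : ((1:F) - t * (t - 1)⁻¹ * x) * s = 1 := by
          field_simp
          linear_combination -hrel
        exact inv_eq_of_mul_eq_one_right hm
      · rw [show t * (t - 1)⁻¹ - 1 = (t - 1)⁻¹ by field_simp; ring, inv_inv]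
        field_simp
    · rintro u hu
      simp only [Finset.mem_filter, Finset.mem_univ, true_and] at hu
      obtain ⟨hu0, h1u, h1ux⟩ := hu
      have hu1 : u - 1 ≠ 0 := fun e => h1u (by linear_combination -e)
      simp only [MulChar.mul_apply, MulChar.inv_apply']
      rw [show ((1:F) - u * (u - 1)⁻¹)⁻¹ = 1 - u by
          rw [show (1:F) - u * (u - 1)⁻¹ = (-1) * (u - 1)⁻¹ by field_simp; ring]
          rw [mul_inv, inv_inv, inv_neg, inv_one]; ring,
        show u * (u - 1)⁻¹ = -1 * (u * (1 - u)⁻¹) by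
          rw [show u - 1 = -(1 - u) by ring, inv_neg]; ring,
        map_mul, map_mul]
      ring

theorem stmt0 [Fintype (MulChar F ℂ)] (A B C : MulChar F ℂ) (x : F) :
    ffHyp A B C x =
      ((Fintype.card F : ℂ) - 1)⁻¹ *
        ∑ χ : MulChar F ℂ, ffBinom (A * χ) χ * ffBinom (B * χ) (C * χ) * χ x := by
  have hcard : ((Fintype.card F : ℂ) - 1) ≠ 0 := by
    have h1 : 1 < Fintype.card F := Fintype.one_lt_card
    have h2 : (Fintype.card F : ℂ) ≠ 1 := by exact_mod_cast h1.ne'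
    exact sub_ne_zero.mpr h2
  have hR : ∑ χ : MulChar F ℂ, ffBinom (A * χ) χ * ffBinom (B * χ) (C * χ) * χ x =
      ∑ s : F, ∑ t : F,
        if s * (1 - s)⁻¹ * (t * (1 - t)⁻¹) * x = 1 then
          (C (-1) * (A s * (B t * C⁻¹ (1 - t)))) * ((Fintype.card F : ℂ) - 1) else 0 := by
    simp only [ffAux_perchi]
    rw [Finset.sum_comm]
    refine Finset.sum_congr rfl fun s _ ↦ ?_
    rw [Finset.sum_comm]
    refine Finset.sum_congr rfl fun t _ ↦ ?_
    rw [← Finset.mul_sum, ffAux_sum_chars_eq]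
    split_ifs <;> simp
  rw [ffAux_core, hR, Finset.mul_sum]
  refine Finset.sum_congr rfl fun s _ ↦ ?_
  rw [Finset.mul_sum]
  refine Finset.sum_congr rfl fun t _ ↦ ?_
  split_ifs
  · field_simp
  · simp
end

section
/- For multiplicative characters A, B, C of F_q, ₂F₁[A,B;C;1] = A(-1)·[B choose ĀC], where [X choose Y] = Y(-1)·J(X,Ȳ). -/
open Finset

variable {F : Type*} [Field F] [Fintype F] [DecidableEq F]

/-
The point `1` turns the defining sum of `₂F₁` into the Jacobi sum `J(B, ĀB̄C)`. The substitution
`t ↦ 1 - (1 - t)⁻¹`, an involution of `F` (also with `0⁻¹ = 0`), transforms `J(χ, ψ)` into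
`χ(-1) · J(χ, (χψ)⁻¹)`; applied with `χ = B`, `ψ = ĀB̄C`, it yields `[B choose ĀC]` up to
the signs `B(-1)`, `A(-1)`, which square to `1`.
-/

lemma MulChar.apply_neg_one_mul_self {M R : Type*} [CommRing M] [CommMonoidWithZero R]
    (χ : MulChar M R) : χ (-1) * χ (-1) = 1 := by
  rw [← map_mul, neg_one_mul, neg_neg, map_one]

section JacobiSum

variable {K R : Type*} [Field K] [CommRing R]

lemma involutive_one_sub_inv_one_sub : Function.Involutive fun t : K => 1 - (1 - t)⁻¹ := by
  intro t
  simp only [sub_sub_cancel, inv_inv]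

lemma MulChar.apply_one_sub_inv_one_sub_mul (χ ψ : MulChar K R) (t : K) :
    χ (-1) * (χ (1 - (1 - t)⁻¹) * (χ * ψ)⁻¹ (1 - t)⁻¹) = χ t * ψ (1 - t) := by
  rw [MulChar.inv_apply', inv_inv, MulChar.mul_apply]
  rcases eq_or_ne (1 - t) 0 with ht | ht
  · simp only [ht, MulChar.map_zero, mul_zero]
  · have hsub : 1 - (1 - t)⁻¹ = -1 * t * (1 - t)⁻¹ := by
      field_simp
      ring
    have hcancel : χ (1 - t)⁻¹ * χ (1 - t) = 1 := by
      rw [← map_mul, inv_mul_cancel₀ ht, map_one]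
    rw [hsub, map_mul, map_mul]
    linear_combination (χ t * ψ (1 - t) * χ (-1) * χ (-1)) * hcancel
      + χ t * ψ (1 - t) * χ.apply_neg_one_mul_self

variable [Fintype K]

theorem jacobiSum_eq_apply_neg_one_mul_jacobiSum_inv (χ ψ : MulChar K R) :
    jacobiSum χ ψ = χ (-1) * jacobiSum χ (χ * ψ)⁻¹ := by
  symm
  rw [jacobiSum, jacobiSum, mul_sum, ← Equiv.sum_comp involutive_one_sub_inv_one_sub.toPerm]
  refine sum_congr rfl fun t _ => ?_
  rw [Function.Involutive.coe_toPerm, sub_sub_cancel, χ.apply_one_sub_inv_one_sub_mul]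

end JacobiSum

theorem stmt1 (A B C : MulChar F ℂ) :
    ffHyp A B C (1 : F) = A (-1) * ffBinom B (A⁻¹ * C) := by
  have hJacobi : ∑ u : F, B u * (B⁻¹ * C) (1 - u) * A⁻¹ (1 - u * 1)
      = jacobiSum B (A⁻¹ * (B⁻¹ * C)) := by
    refine sum_congr rfl fun u _ => ?_
    simp only [mul_one, MulChar.mul_apply]
    ring
  have hprod : B * (A⁻¹ * (B⁻¹ * C)) = A⁻¹ * C := by
    rw [mul_left_comm, mul_inv_cancel_left]
  rw [ffHyp, ffBinom, hJacobi, jacobiSum_eq_apply_neg_one_mul_jacobiSum_inv, hprod,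
    MulChar.one_apply isUnit_one, MulChar.mul_apply, MulChar.mul_apply]
  have hA : A (-1) * A⁻¹ (-1) = 1 := by
    rw [← MulChar.mul_apply, mul_inv_cancel, MulChar.one_apply isUnit_one.neg]
  linear_combination C (-1) * jacobiSum B (A⁻¹ * C)⁻¹ * (B.apply_neg_one_mul_self - hA)
end

section
/- For multiplicative characters A, B, B', C of F_q and x ∈ F_q, F₁(A;B,B';C;x,1) = B'(-1)·₂F₁[B, A; B̄'C; x]. -/
open Finset

variable {F : Type*} [Field F] [Fintype F] [DecidableEq F]

theorem MulChar.apply_neg_one_mul_inv_apply_neg_one {R R' : Type*} [CommRing R]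
    [CommMonoidWithZero R'] (χ : MulChar R R') : χ (-1) * χ⁻¹ (-1) = 1 := by
  rw [← MulChar.mul_apply, mul_inv_cancel, MulChar.one_apply isUnit_one.neg]

theorem stmt5 (A B B' C : MulChar F ℂ) (x : F) :
    ffAppellF1 A B B' C x 1 = B' (-1) * ffHyp B A (B'⁻¹ * C) x := by
  have hsum : ∑ u : F, A u * (A⁻¹ * C) (1 - u) * B⁻¹ (1 - u * x) * B'⁻¹ (1 - u * 1)
      = ∑ u : F, A u * (A⁻¹ * (B'⁻¹ * C)) (1 - u) * B⁻¹ (1 - u * x) :=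
    sum_congr rfl fun u _ => by simp only [mul_one, MulChar.mul_apply]; ring
  have hsign : (A * C) (-1) = B' (-1) * (A * (B'⁻¹ * C)) (-1) := by
    simp only [MulChar.mul_apply]
    linear_combination (-(A (-1) * C (-1))) * B'.apply_neg_one_mul_inv_apply_neg_one
  rw [ffAppellF1, ffHyp, mul_one, hsum, hsign]
  ring
end

section
/- For multiplicative characters A, B, C of F_q and x, y ∈ F_q, F₁(A;B,ε;C;x,y) = ε(y)·₂F₁[B,A;C;x] − ε(x)·(ĀC)(1−y)·(BC̄)(y)·B̄(y−x), where ε is the trivial character extended by ε(0)=0. -/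
/-!
For `y ≠ 0` the factor `ε(1 - u y)` is `1` except at `u = 1/y`, where it vanishes, so the
`F₁` sum is the `₂F₁` sum with the single summand `u = 1/y` removed. Collecting the arguments
of `A`, `B` and `C` in that summand, via `1 - 1/y = -(1 - y)/y` and `1 - x/y = (y - x)/y`,
turns it into the correction term. For `y = 0` both sides vanish.
-/

open Finset

variable {F : Type*} [Field F] [Fintype F] [DecidableEq F]

namespace MulChar

variable {K R : Type*} [Field K] [CommRing R]

lemma one_apply_of_ne_zero {a : K} (ha : a ≠ 0) : (1 : MulChar K R) a = 1 :=
  one_apply (isUnit_iff_ne_zero.mpr ha)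

lemma sum_mul_one_apply_one_sub_mul [Fintype K] [DecidableEq K] (f : K → R) {y : K}
    (hy : y ≠ 0) :
    ∑ u, f u * (1 : MulChar K R) (1 - u * y) = ∑ u, f u - f y⁻¹ := by
  rw [← sum_erase_eq_sub (mem_univ y⁻¹), ← sum_erase_add _ _ (mem_univ y⁻¹),
    inv_mul_cancel₀ hy, sub_self, MulChar.map_zero, mul_zero, add_zero]
  refine sum_congr rfl fun u hu => ?_
  rw [one_apply_of_ne_zero, mul_one]
  exact sub_ne_zero.mpr fun h => ne_of_mem_erase hu (eq_inv_of_mul_eq_one_left h.symm)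

end MulChar

open MulChar in
lemma appellF1_summand_at_inv {K R : Type*} [Field K] [CommRing R] (A B C : MulChar K R) (x : K)
    {y : K} (hy : y ≠ 0) :
    (A * C) (-1) * (A y⁻¹ * (A⁻¹ * C) (1 - y⁻¹) * B⁻¹ (1 - y⁻¹ * x)) =
      (A⁻¹ * C) (1 - y) * (B * C⁻¹) y * B⁻¹ (y - x) := by
  have hA : -1 * y⁻¹ * (1 - y⁻¹)⁻¹ = (1 - y)⁻¹ := by
    rw [show (1 : K) - y⁻¹ = -y⁻¹ * (1 - y) by field_simp; ring, mul_inv, inv_neg, inv_inv]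
    field_simp
  have hB : (1 - y⁻¹ * x)⁻¹ = y * (y - x)⁻¹ := by
    rw [show 1 - y⁻¹ * x = y⁻¹ * (y - x) by field_simp, mul_inv, inv_inv]
  have hC : -1 * (1 - y⁻¹) = (1 - y) * y⁻¹ := by field_simp; ring
  calc _ = A (-1 * y⁻¹ * (1 - y⁻¹)⁻¹) * B (1 - y⁻¹ * x)⁻¹ * C (-1 * (1 - y⁻¹)) := by
          simp only [mul_apply, inv_apply', map_mul]; ring
    _ = A (1 - y)⁻¹ * B (y * (y - x)⁻¹) * C ((1 - y) * y⁻¹) := by rw [hA, hB, hC]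
    _ = _ := by simp only [mul_apply, inv_apply', map_mul]; ring

open MulChar in
theorem stmt6 (A B C : MulChar F ℂ) (x y : F) :
    ffAppellF1 A B 1 C x y =
      (1 : MulChar F ℂ) y * ffHyp B A C x -
        (1 : MulChar F ℂ) x * (A⁻¹ * C) (1 - y) * (B * C⁻¹) y * B⁻¹ (y - x) := by
  rcases eq_or_ne y 0 with rfl | hy
  · simp [ffAppellF1]
  · rw [ffAppellF1, ffHyp, inv_one, sum_mul_one_apply_one_sub_mul _ hy, map_mul,
      one_apply_of_ne_zero hy]
    linear_combination (-(1 : MulChar F ℂ) x) * appellF1_summand_at_inv A B C x hy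
end

section
/- For multiplicative characters B, A, C of F_q and x ∈ F_q with x ≠ 1, ₂F₁[B,A;C;x] = C(-1)·B̄(1−x)·₂F₁[B, ĀC; C; x/(x−1)]. -/
open Finset

variable {F : Type*} [Field F] [Fintype F] [DecidableEq F]

/-! Substitute `u ↦ 1 - u` in the defining sum and factor
`1 - (1 - u) x = (1 - x)(1 - u · x/(x - 1))`; the character values at `-1` cancel because
`χ(-1)² = 1`. -/

namespace MulChar

variable {R R' : Type*} [CommRing R] [CommRing R']

lemma apply_neg_one_mul_self_s12 (χ : MulChar R R') : χ (-1) * χ (-1) = 1 := by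
  rw [← map_mul, neg_mul_neg, one_mul, map_one]

lemma inv_apply_neg_one (χ : MulChar R R') : χ⁻¹ (-1) = χ (-1) := by
  calc χ⁻¹ (-1) = (χ⁻¹ * χ) (-1) * χ (-1) := by
        rw [coeToFun_mul, Pi.mul_apply, mul_assoc, apply_neg_one_mul_self_s12, mul_one]
    _ = χ (-1) := by rw [inv_mul, one_apply isUnit_one.neg, one_mul]

lemma inv_mul_mul_apply_neg_one (χ ψ : MulChar R R') : (χ⁻¹ * ψ * ψ) (-1) = χ (-1) := by
  rw [coeToFun_mul, coeToFun_mul, Pi.mul_apply, Pi.mul_apply, mul_assoc,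
    apply_neg_one_mul_self_s12, mul_one, inv_apply_neg_one]

lemma one_apply_div {K : Type*} [Field K] {x y : K} (hy : y ≠ 0) :
    (1 : MulChar K R') (x / y) = (1 : MulChar K R') x := by
  rcases eq_or_ne x 0 with rfl | hx
  · rw [zero_div]
  · rw [one_apply (div_ne_zero hx hy).isUnit, one_apply hx.isUnit]

end MulChar

lemma one_sub_mul_one_sub_mul_div_sub_one {K : Type*} [Field K] {x : K} (hx : x ≠ 1) (u : K) :
    (1 - x) * (1 - u * (x / (x - 1))) = 1 - (1 - u) * x := by
  field_simp [sub_ne_zero.mpr hx]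
  ring

theorem stmt12 (B A C : MulChar F ℂ) (x : F) (hx : x ≠ 1) :
    ffHyp B A C x = C (-1) * B⁻¹ (1 - x) * ffHyp B (A⁻¹ * C) C (x / (x - 1)) := by
  have hAC : (A⁻¹ * C)⁻¹ * C = A := by rw [mul_inv, inv_inv, inv_mul_cancel_right]
  simp only [ffHyp, MulChar.one_apply_div (sub_ne_zero.mpr hx), hAC,
    MulChar.inv_mul_mul_apply_neg_one, mul_sum]
  rw [← (Equiv.subLeft 1).sum_comp]
  refine sum_congr rfl fun u _ => ?_
  rw [Equiv.subLeft_apply, sub_sub_cancel, ← one_sub_mul_one_sub_mul_div_sub_one hx u, map_mul,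
    MulChar.coeToFun_mul, Pi.mul_apply]
  ring
end

section
/- For multiplicative characters A, B, C of F_q and x ∈ F_q, ₂F₁[B,A;C;x] = B(-1)·₂F₁[B,A;ABC̄;1−x] + B(-1)·[A choose B̄C]·δ(1−x) − [A choose C]·δ(x), where δ(0)=1 and δ(t)=0 for t≠0. -/
open Finset

variable {F : Type*} [Field F] [Fintype F] [DecidableEq F]

noncomputable def phiInv (u : F) : F := if u = 1 then 1 else u / (u - 1)

lemma phiInv_invol : Function.Involutive (phiInv (F := F)) := by
  intro u
  unfold phiInv
  by_cases h : u = 1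
  · simp [h]
  · have h1 : u - 1 ≠ 0 := sub_ne_zero.mpr h
    have h2 : u / (u - 1) ≠ 1 := by
      intro he
      rw [div_eq_one_iff_eq h1] at he
      exact one_ne_zero (by linear_combination he)
    have h3 : u / (u - 1) - 1 ≠ 0 := sub_ne_zero.mpr h2
    rw [if_neg h, if_neg h2]
    field_simp
    ring

lemma key_term (A B C : MulChar F ℂ) (x u : F) :
    A (-1) * (A u * (B * C⁻¹) (1 - u) * B⁻¹ (1 - u * (1 - x))) =
    A (phiInv u) * (A⁻¹ * C) (1 - phiInv u) * B⁻¹ (1 - phiInv u * x) := by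
  by_cases h : u = 1
  · simp [phiInv, h, MulChar.mul_apply, MulChar.map_zero]
  · have h1 : u - 1 ≠ 0 := sub_ne_zero.mpr h
    have e3 : phiInv u = u * (u - 1)⁻¹ := by rw [phiInv, if_neg h, div_eq_mul_inv]
    have e1 : 1 - phiInv u = -1 * (u - 1)⁻¹ := by rw [e3]; field_simp; ring
    have e2 : 1 - phiInv u * x = -1 * (1 - u * (1 - x)) * (u - 1)⁻¹ := by
      rw [e3]; field_simp; ring
    have e4 : (1 : F) - u = -1 * (u - 1) := by ring
    have hAu : A (u - 1) * A ((u - 1)⁻¹) = 1 := by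
      rw [← map_mul, mul_inv_cancel₀ h1, map_one]
    rw [e1, e2, e3, e4]
    simp only [map_mul, MulChar.mul_apply, MulChar.inv_apply', mul_inv, inv_inv, inv_neg, inv_one]
    have hAu2 : A ((-1 + u)⁻¹) * A (-1 + u) = 1 := by
      rw [← map_mul, inv_mul_cancel₀ (by intro hh; apply h1; linear_combination hh), map_one]
    ring_nf
    linear_combination (-(A (-1)) * A u * B (-1) * C (-1) * B (-1 + u) * C ((-1 + u)⁻¹) *
      B ((1 - u + u * x)⁻¹)) * hAu2

lemma key_sum (A B C : MulChar F ℂ) (x : F) :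
    A (-1) * ∑ u : F, A u * (B * C⁻¹) (1 - u) * B⁻¹ (1 - u * (1 - x)) =
    ∑ u : F, A u * (A⁻¹ * C) (1 - u) * B⁻¹ (1 - u * x) := by
  rw [Finset.mul_sum,
    ← Equiv.sum_comp (Function.Involutive.toPerm _ phiInv_invol)
      (fun u => A u * (A⁻¹ * C) (1 - u) * B⁻¹ (1 - u * x))]
  exact Finset.sum_congr rfl fun u _ => by
    simpa [Function.Involutive.coe_toPerm] using key_term A B C x u

lemma combine_sum (A X Y : MulChar F ℂ) :
    ∑ u : F, A u * X (1 - u) * Y (1 - u) = jacobiSum A (X * Y) := by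
  rw [jacobiSum]
  exact Finset.sum_congr rfl fun u _ => by rw [MulChar.mul_apply, mul_assoc]

theorem stmt16 (A B C : MulChar F ℂ) (x : F) :
    ffHyp B A C x =
      B (-1) * ffHyp B A (A * B * C⁻¹) (1 - x) +
        B (-1) * ffBinom A (B⁻¹ * C) * ffDelta (1 - x) - ffBinom A C * ffDelta x := by
  have hsq : ∀ (χ : MulChar F ℂ), χ (-1) * χ (-1) = 1 := fun χ => by
    rw [← map_mul, neg_mul_neg, one_mul, map_one]
  have hinv : ∀ (χ : MulChar F ℂ), χ⁻¹ (-1) = χ (-1) := fun χ => by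
    rw [MulChar.inv_apply', inv_neg, inv_one]
  have hgrp : A⁻¹ * (A * B * C⁻¹) = B * C⁻¹ := by group
  have hABC : (A * (A * B * C⁻¹)) (-1) = A (-1) * (A (-1) * B (-1) * C (-1)) := by
    rw [MulChar.mul_apply, MulChar.mul_apply, MulChar.mul_apply, hinv]
  have hAC : (A * C) (-1) = A (-1) * C (-1) := MulChar.mul_apply ..
  have hBC : (B⁻¹ * C) (-1) = B (-1) * C (-1) := by
    rw [MulChar.mul_apply, hinv]
  simp only [ffHyp, ffBinom, ffDelta, hgrp]
  by_cases hx0 : x = 0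
  · subst hx0
    simp only [sub_zero, mul_one, eq_self_iff_true, if_true, one_ne_zero, if_false, mul_zero,
      add_zero, MulChar.map_zero, zero_mul, map_one, one_mul]
    rw [combine_sum A (B * C⁻¹) B⁻¹,
      show B * C⁻¹ * B⁻¹ = C⁻¹ by rw [mul_comm B C⁻¹, mul_assoc, mul_inv_cancel, mul_one],
      hABC]
    linear_combination (-(C (-1) * jacobiSum A C⁻¹) * (B (-1) * B (-1))) * hsq A
      - (C (-1) * jacobiSum A C⁻¹) * hsq B
  by_cases hx1 : x = 1
  · subst hx1
    have hJ := key_sum A B C 1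
    simp only [sub_self, mul_zero, sub_zero, map_one, mul_one] at hJ
    rw [show (∑ u : F, A u * (B * C⁻¹) (1 - u)) = jacobiSum A (B * C⁻¹) from rfl,
      combine_sum A (A⁻¹ * C) B⁻¹] at hJ
    simp only [sub_self, mul_one, eq_self_iff_true, if_true, one_ne_zero, if_false, mul_zero,
      add_zero, MulChar.map_zero, zero_mul, map_one, one_mul, sub_zero]
    rw [combine_sum A (A⁻¹ * C) B⁻¹, show (B⁻¹ * C)⁻¹ = B * C⁻¹ by rw [mul_inv, inv_inv],
      hAC, hBC]
    linear_combination (-(A (-1) * C (-1))) * hJ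
      + (C (-1) * jacobiSum A (B * C⁻¹)) * hsq A
      - (C (-1) * jacobiSum A (B * C⁻¹)) * hsq B
  · have h1x : (1 : F) - x ≠ 0 := sub_ne_zero.mpr (Ne.symm hx1)
    rw [if_neg hx0, if_neg h1x, MulChar.one_apply (isUnit_iff_ne_zero.mpr hx0),
      MulChar.one_apply (isUnit_iff_ne_zero.mpr h1x)]
    simp only [mul_zero, add_zero, sub_zero, one_mul]
    have hK := key_sum A B C x
    rw [← hK, hAC, hABC]
    linear_combination (-(A (-1) * A (-1) * C (-1) *
      ∑ u : F, A u * (B * C⁻¹) (1 - u) * B⁻¹ (1 - u * (1 - x)))) * hsq B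
end
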